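/- Let G be a finite multidigraph that is k-out-regular for an integer k > 1, with an edge e* = (w*, v*). Then the homomorphism σ̄ : cok ψ → K(𝓛G, e*) induced by σ is injective. -/

import Mathlib

open Finsupp

/-- The Laplacian of a multidigraph with edge tail map `t` and head map `h`,
as a linear endomorphism of the free abelian group on the vertices. -/
noncomputable def lap {V E : Type*} [Fintype E] [DecidableEq V] (t h : E → V) :
    (V →₀ ℤ) →ₗ[ℤ] (V →₀ ℤ) :=
  Finsupp.lift (V →₀ ℤ) ℤ V fun v =>
    ∑ e : E, if t e = v then Finsupp.single (h e) (1 : ℤ) - Finsupp.single v 1 else 0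

/-- The modified Laplacian `φ_{G,w}` : sends `v ↦ Δ_G v` for `v ≠ w`, and `w ↦ w`. -/
noncomputable def phiMod {V E : Type*} [Fintype E] [DecidableEq V] (t h : E → V) (w : V) :
    (V →₀ ℤ) →ₗ[ℤ] (V →₀ ℤ) :=
  Finsupp.lift (V →₀ ℤ) ℤ V fun v =>
    if v = w then Finsupp.single w 1 else lap t h (Finsupp.single v 1)

/-- Edges of the directed line graph: pairs `(e, f)` with `e⁺ = f⁻`. -/
def LineEdge {V E : Type*} (t h : E → V) : Type _ := {p : E × E // h p.1 = t p.2}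

instance {V E : Type*} [Fintype E] [DecidableEq V] (t h : E → V) :
    Fintype (LineEdge t h) := by
  unfold LineEdge; infer_instance

/-- in-degree of a vertex -/
def indeg {V E : Type*} [Fintype E] [DecidableEq V] (h : E → V) (v : V) : ℕ :=
  (Finset.univ.filter fun e => h e = v).card

/-- out-degree of a vertex -/
def outdeg {V E : Type*} [Fintype E] [DecidableEq V] (t : E → V) (v : V) : ℕ :=
  (Finset.univ.filter fun e => t e = v).card

/-- The modified target map `τ`: `e ↦ e⁺` for `e ≠ e*`, `e* ↦ 0`. -/
noncomputable def tau {V E : Type*} [DecidableEq E] (h : E → V) (estar : E) :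
    (E →₀ ℤ) →ₗ[ℤ] (V →₀ ℤ) :=
  Finsupp.lift (V →₀ ℤ) ℤ E fun e =>
    if e = estar then 0 else Finsupp.single (h e) 1

/-- The map `ρ`: `e ↦ Δ_G(w*) − v* − w* + e⁺` for `e ≠ e*`, `e* ↦ 0`,
where `w* = t e*` and `v* = h e*`. -/
noncomputable def rho {V E : Type*} [Fintype E] [DecidableEq V] [DecidableEq E]
    (t h : E → V) (estar : E) : (E →₀ ℤ) →ₗ[ℤ] (V →₀ ℤ) :=
  Finsupp.lift (V →₀ ℤ) ℤ E fun e =>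
    if e = estar then 0 else
      lap t h (Finsupp.single (t estar) 1) - Finsupp.single (h estar) 1
        - Finsupp.single (t estar) 1 + Finsupp.single (h e) 1

/-- The map `ρ₀`: `v ↦ Δ_G(w*) − v* − w* + v`. -/
noncomputable def rho0 {V E : Type*} [Fintype E] [DecidableEq V] (t h : E → V) (estar : E) :
    (V →₀ ℤ) →ₗ[ℤ] (V →₀ ℤ) :=
  Finsupp.lift (V →₀ ℤ) ℤ V fun v =>
    lap t h (Finsupp.single (t estar) 1) - Finsupp.single (h estar) 1
      - Finsupp.single (t estar) 1 + Finsupp.single v 1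

/-- The map `ψ`: `v ↦ Δ_G v` for `v ≠ w*`, and `w* ↦ Δ_G(w*) − v*`. -/
noncomputable def psi {V E : Type*} [Fintype E] [DecidableEq V] (t h : E → V) (estar : E) :
    (V →₀ ℤ) →ₗ[ℤ] (V →₀ ℤ) :=
  Finsupp.lift (V →₀ ℤ) ℤ V fun v =>
    if v = t estar then
      lap t h (Finsupp.single (t estar) 1) - Finsupp.single (h estar) 1
    else lap t h (Finsupp.single v 1)

/-- The map `σ`: `v ↦ Σ_{e⁻ = v} e`. -/
noncomputable def sigmaMap {V E : Type*} [Fintype E] [DecidableEq V] (t : E → V) :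
    (V →₀ ℤ) →ₗ[ℤ] (E →₀ ℤ) :=
  Finsupp.lift (E →₀ ℤ) ℤ V fun v =>
    ∑ e : E, if t e = v then Finsupp.single e (1 : ℤ) else 0


/-!
Write `τ` for the map `e ↦ e⁺` (`e* ↦ 0`). On a `k`-out-regular graph the line-graph map is
`φ = σ ∘ τ - k + (k + 1) π*`, with `π*` the projection onto `e*`, and `τ ∘ σ = ψ + k`; hence
`τ ∘ φ = ψ ∘ τ`. Suppose `σ y = φ x`. As `k > 1`, every vertex `v` has an out-edge `c v ≠ e*`, and
comparing coordinates at `c v` gives `τ x = y + k z` with `z v = x (c v)`. Applying `τ` to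
`σ y = φ x` yields `ψ y + k y = ψ y + k ψ z`, so `y = ψ z`.
-/

theorem Finsupp.lift_apply_single_one {X M : Type*} [AddCommGroup M] (f : X → M) (x : X) :
    Finsupp.lift M ℤ X f (single x 1) = f x := by
  simp

section

variable {V E : Type*}

theorem sum_lineEdge_ite_fst_eq {M : Type*} [AddCommMonoid M] [Fintype E] [DecidableEq V]
    [DecidableEq E] (t h : E → V) (g : E → M) (e : E) :
    ∑ p : LineEdge t h, (if p.1.1 = e then g p.1.2 else 0) =
      ∑ f : E, if t f = h e then g f else 0 := by
  refine (Finset.sum_subtype (F := (inferInstance : Fintype (LineEdge t h)))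
    (Finset.univ.filter fun q : E × E => h q.1 = t q.2) (by simp)
    (fun q : E × E => if q.1 = e then g q.2 else 0)).symm.trans ?_
  rw [Finset.sum_filter, Fintype.sum_prod_type,
    Finset.sum_eq_single e (by simp +contextual) (by simp)]
  simp [eq_comm]

theorem sum_ite_sub_eq_sub_outdeg_smul {M : Type*} [AddCommGroup M] [Fintype E] [DecidableEq V]
    (t : E → V) (g : E → M) (c : M) (v : V) :
    (∑ e : E, if t e = v then g e - c else 0) =
      (∑ e : E, if t e = v then g e else 0) - (outdeg t v : ℤ) • c := by
  simp only [outdeg, natCast_zsmul, ← Finset.sum_filter, Finset.sum_sub_distrib, Finset.sum_const]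

theorem lap_single [Fintype E] [DecidableEq V] (t h : E → V) (v : V) :
    lap t h (single v 1) =
      (∑ e : E, if t e = v then single (h e) 1 else 0) - (outdeg t v : ℤ) • single v 1 :=
  (lift_apply_single_one _ _).trans (sum_ite_sub_eq_sub_outdeg_smul t _ _ v)

theorem sigmaMap_single [Fintype E] [DecidableEq V] (t : E → V) (v : V) :
    sigmaMap t (single v 1) = ∑ e : E, if t e = v then single e 1 else 0 :=
  lift_apply_single_one _ _

theorem sigmaMap_apply [Fintype E] [DecidableEq V] (t : E → V) (y : V →₀ ℤ) (f : E) :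
    sigmaMap t y f = y (t f) := by
  induction y using Finsupp.induction_linear with
  | zero => simp
  | add y z hy hz => simp [hy, hz]
  | single v n =>
    rw [← smul_single_one, map_smul, sigmaMap_single, Finsupp.smul_apply, finsetSum_apply,
      Finset.sum_eq_single f (fun b _ hb => by split_ifs <;> simp [hb]) (by simp)]
    by_cases hv : t f = v <;> simp [hv]

theorem tau_single [DecidableEq E] (h : E → V) (estar e : E) :
    tau h estar (single e 1) = if e = estar then 0 else single (h e) 1 :=
  lift_apply_single_one _ _

theorem psi_single [Fintype E] [DecidableEq V] (t h : E → V) (estar : E) (v : V) :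
    psi t h estar (single v 1) =
      lap t h (single v 1) - if v = t estar then single (h estar) 1 else 0 := by
  by_cases hv : v = t estar <;> simp [psi, hv]

theorem tau_sigmaMap_single [Fintype E] [DecidableEq V] [DecidableEq E] (t h : E → V)
    (estar : E) (v : V) :
    tau h estar (sigmaMap t (single v 1)) =
      psi t h estar (single v 1) + (outdeg t v : ℤ) • single v 1 := by
  have hsplit : ∀ e, (if t e = v then tau h estar (single e 1) else 0) =
      (if t e = v then single (h e) 1 else 0) -
        if e = estar then (if t e = v then single (h e) 1 else 0) else 0 := by
    intro e
    by_cases he : e = estar <;> by_cases hv : t e = v <;> simp [tau_single, he, hv]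
  simp only [sigmaMap_single, map_sum, apply_ite (tau h estar), map_zero, hsplit,
    Finset.sum_sub_distrib, Finset.sum_ite_eq', Finset.mem_univ, if_true, psi_single, lap_single,
    eq_comm (a := v)]
  abel

noncomputable abbrev phiLine [Fintype E] [DecidableEq V] [DecidableEq E] (t h : E → V)
    (estar : E) : (E →₀ ℤ) →ₗ[ℤ] (E →₀ ℤ) :=
  phiMod (fun p : LineEdge t h => p.1.1) (fun p : LineEdge t h => p.1.2) estar

theorem phiLine_single_of_ne [Fintype E] [DecidableEq V] [DecidableEq E] (t h : E → V)
    {estar e : E} (he : e ≠ estar) :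
    phiLine t h estar (single e 1) =
      sigmaMap t (single (h e) 1) - (outdeg t (h e) : ℤ) • single e 1 := by
  simp only [phiLine, phiMod, lift_apply_single_one, if_neg he, lap, sigmaMap_single]
  exact (sum_lineEdge_ite_fst_eq t h (fun f => single f 1 - single e 1) e).trans
    (sum_ite_sub_eq_sub_outdeg_smul t _ _ _)

theorem exists_outEdge_ne [Fintype E] [DecidableEq V] {t : E → V} {k : ℕ} (hk : 1 < k)
    (hreg : ∀ v, outdeg t v = k) (estar : E) (v : V) :
    ∃ e, t e = v ∧ e ≠ estar := by
  have hnt : (Finset.univ.filter fun e => t e = v).Nontrivial := by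
    rw [← Finset.one_lt_card_iff_nontrivial, ← outdeg, hreg]
    exact hk
  simpa using hnt.exists_ne estar

end

section OutRegular

variable {V E : Type*} [Fintype E] [DecidableEq V] [DecidableEq E] {t : E → V} (h : E → V)
  (estar : E) {k : ℕ}

theorem tau_comp_sigmaMap (hreg : ∀ v, outdeg t v = k) :
    (tau h estar).comp (sigmaMap t) = psi t h estar + (k : ℤ) • LinearMap.id :=
  Finsupp.lhom_ext' fun v => LinearMap.ext_ring <| by
    simpa [hreg v] using tau_sigmaMap_single t h estar v

theorem phiLine_eq (hreg : ∀ v, outdeg t v = k) :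
    phiLine t h estar = (sigmaMap t).comp (tau h estar) - (k : ℤ) • LinearMap.id +
      ((k : ℤ) + 1) • (lsingle estar).comp (lapply estar) := by
  refine Finsupp.lhom_ext' fun e => LinearMap.ext_ring ?_
  by_cases he : e = estar
  · subst he
    simp [phiMod, tau_single]
  · simp [phiLine_single_of_ne t h he, hreg, tau_single, he]

theorem tau_comp_phiLine (hreg : ∀ v, outdeg t v = k) :
    (tau h estar).comp (phiLine t h estar) = (psi t h estar).comp (tau h estar) := by
  have htau : (tau h estar).comp (lsingle estar) = 0 :=
    LinearMap.ext_ring (by simp [tau_single])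
  rw [phiLine_eq h estar hreg, LinearMap.comp_add, LinearMap.comp_sub, ← LinearMap.comp_assoc,
    tau_comp_sigmaMap h estar hreg, LinearMap.comp_smul, LinearMap.comp_smul,
    ← LinearMap.comp_assoc, htau, LinearMap.add_comp, LinearMap.smul_comp, LinearMap.id_comp,
    LinearMap.comp_id, LinearMap.zero_comp, smul_zero, add_zero, add_sub_cancel_right]

theorem phiLine_apply_of_ne (hreg : ∀ v, outdeg t v = k) (x : E →₀ ℤ) {f : E}
    (hf : f ≠ estar) :
    phiLine t h estar x f = tau h estar x (t f) - k * x f := by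
  rw [phiLine_eq h estar hreg]
  simp [sigmaMap_apply, single_eq_of_ne hf]

theorem mem_range_psi_of_sigmaMap_mem_range_phiLine (hk : 1 < k) (hreg : ∀ v, outdeg t v = k)
    {y : V →₀ ℤ}
    (hy : sigmaMap t y ∈ LinearMap.range (phiLine t h estar)) :
    y ∈ LinearMap.range (psi t h estar) := by
  obtain ⟨x, hx⟩ := hy
  choose c htc hc using exists_outEdge_ne hk hreg estar
  have hc_inj : Function.Injective c := fun v w hvw => by rw [← htc v, hvw, htc w]
  set z : V →₀ ℤ := comapDomain c x hc_inj.injOn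
  have htau : tau h estar x = y + (k : ℤ) • z := by
    ext v
    have := phiLine_apply_of_ne h estar hreg x (hc v)
    rw [hx, sigmaMap_apply, htc v] at this
    simp [z, this]
  have hpsi : psi t h estar y + (k : ℤ) • y = psi t h estar y + (k : ℤ) • psi t h estar z := by
    calc psi t h estar y + (k : ℤ) • y = tau h estar (sigmaMap t y) := by
          simp [← LinearMap.comp_apply, tau_comp_sigmaMap h estar hreg]
      _ = psi t h estar (tau h estar x) := by
          rw [← hx, ← LinearMap.comp_apply, tau_comp_phiLine h estar hreg, LinearMap.comp_apply]
      _ = _ := by rw [htau, map_add, map_smul]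
  exact ⟨z, (smul_right_injective _ (by omega : (k : ℤ) ≠ 0) (add_left_cancel hpsi)).symm⟩

end OutRegular

/-- for a `k`-out-regular graph with `k > 1`, the induced
homomorphism `σ̄ : cok ψ → K(𝓛G, e*)` is injective. -/
theorem sigma_bar_injective
    {V E : Type*} [Fintype E] [DecidableEq V] [DecidableEq E]
    (t h : E → V) (estar : E) (k : ℕ) (hk : 1 < k)
    (hreg : ∀ v : V, outdeg t v = k) :
    ∀ σbar : ((V →₀ ℤ) ⧸ LinearMap.range (psi t h estar)) →ₗ[ℤ]
        ((E →₀ ℤ) ⧸ LinearMap.range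
          (phiMod (fun p : LineEdge t h => p.1.1) (fun p : LineEdge t h => p.1.2) estar)),
      (∀ y : V →₀ ℤ,
        σbar (Submodule.Quotient.mk y) = Submodule.Quotient.mk (sigmaMap t y)) →
      Function.Injective σbar := by
  intro σbar hσ
  refine (injective_iff_map_eq_zero σbar).2 fun a ha => ?_
  obtain ⟨y, rfl⟩ := Submodule.Quotient.mk_surjective _ a
  rw [hσ, Submodule.Quotient.mk_eq_zero] at ha
  exact (Submodule.Quotient.mk_eq_zero _).2
    (mem_range_psi_of_sigmaMap_mem_range_phiLine h estar hk hreg ha)
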